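/- Let Q be a path and (Z₁, Z₂, Z₃, Z₄) a nontrivial (Q, r)-scheme with |Z₁| = |Z₂| = |Z₃| = 1 and |Z₄| ≥ 4. Then |V(Q)| ≥ 2|Z₄| + 3r − 7. -/
import Mathlib


open SimpleGraph

private lemma pathGraph_dist_le_aux (n : ℕ) :
    ∀ (d : ℕ) (u v : Fin n), u.val + d = v.val → (pathGraph n).dist u v ≤ d := by
  intro d
  induction d with
  | zero =>
    intro u v h
    have : u = v := Fin.ext (by omega)
    subst this
    simp
  | succ d ih =>
    intro u v h
    have hlt : u.val + 1 < n := by have := v.isLt; omega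
    set u' : Fin n := ⟨u.val + 1, hlt⟩ with hu'
    have hadj : (pathGraph n).Adj u u' := pathGraph_adj.mpr (Or.inl rfl)
    have h1 : (pathGraph n).dist u u' ≤ 1 :=
      le_of_eq (SimpleGraph.dist_eq_one_iff_adj.mpr hadj)
    have h2 := ih u' v (by simp [hu']; omega)
    have hconn : (pathGraph n).Connected := by
      obtain ⟨m, rfl⟩ : ∃ m, n = m + 1 := ⟨n - 1, by have := v.isLt; omega⟩
      exact pathGraph_connected m
    calc (pathGraph n).dist u v ≤ (pathGraph n).dist u u' + (pathGraph n).dist u' v :=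
          hconn.dist_triangle
      _ ≤ 1 + d := Nat.add_le_add h1 h2
      _ = d + 1 := by omega

private lemma pathGraph_dist_le (n : ℕ) (u v : Fin n) :
    (pathGraph n).dist u v ≤ Nat.dist u.val v.val := by
  rcases le_total u.val v.val with h | h
  · have := pathGraph_dist_le_aux n (v.val - u.val) u v (by omega)
    refine le_trans this ?_
    simp [Nat.dist]
  · rw [SimpleGraph.dist_comm]
    have := pathGraph_dist_le_aux n (u.val - v.val) v u (by omega)
    refine le_trans this ?_
    simp [Nat.dist]

private lemma key_count (n r k : ℕ) (hr : 2 ≤ r) (hk4 : 4 ≤ k) (T A : Finset ℕ)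
    (hAT : A ⊆ T) (hA : A.card = 3) (hk : k ≤ T.card)
    (hTn : ∀ x ∈ T, x < n)
    (hT2 : ∀ x ∈ T, ∀ y ∈ T, x < y → x + 2 ≤ y)
    (hArr : ∀ s ∈ A, ∀ y ∈ T, s < y → s + r ≤ y)
    (hAl : ∀ s ∈ A, ∀ y ∈ T, y < s → y + r ≤ s) :
    2 * k + 3 * r - 7 ≤ n := by
  classical
  have hTne : T.Nonempty := Finset.card_pos.mp (by omega)
  set M := T.max' hTne with hM
  have hMT : M ∈ T := T.max'_mem hTne
  set P : ℕ → Prop := fun x => x ∈ A ∨ ∃ s ∈ A, x < s ∧ ∀ z ∈ T, z ≤ x ∨ s ≤ z with hP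
  set E := T.erase M with hE
  set W := E.filter P with hW
  set w : ℕ → ℕ := fun x => if P x then r else 2 with hwdef
  have hwkey : ∀ x ∈ E, ∀ y ∈ T, x < y → x + w x ≤ y := by
    intro x hx y hy hxy
    have hxT : x ∈ T := Finset.mem_of_mem_erase hx
    by_cases hPx : P x
    · have hwx : w x = r := if_pos hPx
      rw [hwx]
      rcases hPx with hxA | ⟨s, hsA, hxs, hsep⟩
      · exact hArr x hxA y hy hxy
      · rcases hsep y hy with h | h
        · omega
        · have := hAl s hsA x hxT hxs
          omega
    · have hwx : w x = 2 := if_neg hPx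
      rw [hwx]
      exact hT2 x hxT y hy hxy
  -- sum of weights is at most M
  have hdisj : ∀ x ∈ E, ∀ y ∈ E, x ≠ y →
      Disjoint (Finset.Ico x (x + w x)) (Finset.Ico y (y + w y)) := by
    intro x hx y hy hne
    rw [Finset.disjoint_left]
    intro t ht1 ht2
    simp only [Finset.mem_Ico] at ht1 ht2
    rcases lt_or_gt_of_ne hne with h | h
    · have := hwkey x hx y (Finset.mem_of_mem_erase hy) h
      omega
    · have := hwkey y hy x (Finset.mem_of_mem_erase hx) h
      omega
  have hsub : E.biUnion (fun x => Finset.Ico x (x + w x)) ⊆ Finset.range M := by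
    intro t ht
    simp only [Finset.mem_biUnion, Finset.mem_Ico] at ht
    obtain ⟨x, hx, h1, h2⟩ := ht
    have hxM : x < M := lt_of_le_of_ne (T.le_max' x (Finset.mem_of_mem_erase hx))
      (Finset.ne_of_mem_erase hx)
    have := hwkey x hx M hMT hxM
    simp only [Finset.mem_range]
    omega
  have hsum : ∑ x ∈ E, w x ≤ M := by
    have h1 : (E.biUnion (fun x => Finset.Ico x (x + w x))).card = ∑ x ∈ E, w x := by
      rw [Finset.card_biUnion hdisj]
      refine Finset.sum_congr rfl fun x _ => ?_
      rw [Nat.card_Ico]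
      omega
    have h2 := Finset.card_le_card hsub
    rw [h1, Finset.card_range] at h2
    exact h2
  have hMn : M < n := hTn M hMT
  -- membership helper for W
  have hWmem : ∀ x, x ∈ T → x ≠ M → P x → x ∈ W := fun x h1 h2 h3 =>
    Finset.mem_filter.mpr ⟨Finset.mem_erase.mpr ⟨h2, h1⟩, h3⟩
  -- extract a sorted triple from A
  obtain ⟨x, y, z, hxy, hxz, hyz, hAeq⟩ := Finset.card_eq_three.mp hA
  have hxA : x ∈ A := by rw [hAeq]; simp
  have hyA : y ∈ A := by rw [hAeq]; simp
  have hzA : z ∈ A := by rw [hAeq]; simp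
  have h3 : ∃ p q s, p ∈ A ∧ q ∈ A ∧ s ∈ A ∧ p < q ∧ q < s := by
    rcases Nat.lt_trichotomy x y with h1 | h1 | h1
    · rcases Nat.lt_trichotomy y z with h2 | h2 | h2
      · exact ⟨x, y, z, hxA, hyA, hzA, h1, h2⟩
      · exact absurd h2 hyz
      · rcases Nat.lt_trichotomy x z with h4 | h4 | h4
        · exact ⟨x, z, y, hxA, hzA, hyA, h4, h2⟩
        · exact absurd h4 hxz
        · exact ⟨z, x, y, hzA, hxA, hyA, h4, h1⟩
    · exact absurd h1 hxy
    · rcases Nat.lt_trichotomy x z with h2 | h2 | h2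
      · exact ⟨y, x, z, hyA, hxA, hzA, h1, h2⟩
      · exact absurd h2 hxz
      · rcases Nat.lt_trichotomy y z with h4 | h4 | h4
        · exact ⟨y, z, x, hyA, hzA, hxA, h4, h2⟩
        · exact absurd h4 hyz
        · exact ⟨z, y, x, hzA, hyA, hxA, h4, h1⟩
  obtain ⟨p, q, s, hpA, hqA, hsA, hpq, hqs⟩ := h3
  have hpT : p ∈ T := hAT hpA
  have hqT : q ∈ T := hAT hqA
  have hsT : s ∈ T := hAT hsA
  have hsM : s ≤ M := T.le_max' s hsT
  -- predecessor construction
  have pred : ∀ u ∈ A, (∃ z₀ ∈ T, z₀ < u) →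
      ∃ e, e ∈ T ∧ e < u ∧ P e ∧ ∀ z₀ ∈ T, z₀ < u → z₀ ≤ e := by
    intro u huA hex
    have hDne : (T.filter (· < u)).Nonempty := by
      obtain ⟨z₀, hz1, hz2⟩ := hex
      exact ⟨z₀, Finset.mem_filter.mpr ⟨hz1, hz2⟩⟩
    set e := (T.filter (· < u)).max' hDne with he
    have heD := (T.filter (· < u)).max'_mem hDne
    have heT : e ∈ T := (Finset.mem_filter.mp heD).1
    have heu : e < u := (Finset.mem_filter.mp heD).2
    have hemax : ∀ z₀ ∈ T, z₀ < u → z₀ ≤ e := fun z₀ h1 h2 =>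
      (T.filter (· < u)).le_max' z₀ (Finset.mem_filter.mpr ⟨h1, h2⟩)
    refine ⟨e, heT, heu, Or.inr ⟨u, huA, heu, ?_⟩, hemax⟩
    intro z₀ hz₀
    by_cases hzu : z₀ < u
    · exact Or.inl (hemax z₀ hz₀ hzu)
    · exact Or.inr (by omega)
  have hTcard : 4 ≤ T.card := le_trans hk4 hk
  have htriple : ∃ x1 x2 x3, x1 < x2 ∧ x2 < x3 ∧ x1 ∈ W ∧ x2 ∈ W ∧ x3 ∈ W := by
    by_cases hsMeq : s = M
    · obtain ⟨e, heT, hes, hPe, hemax⟩ := pred s hsA ⟨q, hqT, hqs⟩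
      have hqe : q ≤ e := hemax q hqT hqs
      by_cases heq : e = q
      · obtain ⟨e2, he2T, he2q, hPe2, he2max⟩ := pred q hqA ⟨p, hpT, hpq⟩
        have hpe2 : p ≤ e2 := he2max p hpT hpq
        by_cases he2p : e2 = p
        · by_cases hbp : ∃ z₀ ∈ T, z₀ < p
          · obtain ⟨e3, he3T, he3p, hPe3, _⟩ := pred p hpA hbp
            exact ⟨e3, p, q, he3p, hpq,
              hWmem _ he3T (by omega) hPe3,
              hWmem _ hpT (by omega) (Or.inl hpA),
              hWmem _ hqT (by omega) (Or.inl hqA)⟩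
          · exfalso
            have hsubT : T ⊆ {p, q, s} := by
              intro z₀ hz₀
              have h1 : z₀ ≤ M := T.le_max' z₀ hz₀
              have h2 : ¬ z₀ < p := fun h => hbp ⟨z₀, hz₀, h⟩
              simp only [Finset.mem_insert, Finset.mem_singleton]
              by_cases h3 : z₀ < q
              · have := he2max z₀ hz₀ h3
                omega
              · by_cases h4 : z₀ < s
                · have := hemax z₀ hz₀ h4
                  omega
                · omega
            have hc1 := Finset.card_le_card hsubT
            have hc2 : ({p, q, s} : Finset ℕ).card ≤ 3 := by
              calc ({p, q, s} : Finset ℕ).card ≤ ({q, s} : Finset ℕ).card + 1 :=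
                    Finset.card_insert_le _ _
                _ ≤ (({s} : Finset ℕ).card + 1) + 1 :=
                    Nat.add_le_add_right (Finset.card_insert_le _ _) 1
                _ = 3 := by simp
            omega
        · exact ⟨p, e2, q, by omega, by omega,
            hWmem _ hpT (by omega) (Or.inl hpA),
            hWmem _ he2T (by omega) hPe2,
            hWmem _ hqT (by omega) (Or.inl hqA)⟩
      · exact ⟨p, q, e, hpq, by omega,
          hWmem _ hpT (by omega) (Or.inl hpA),
          hWmem _ hqT (by omega) (Or.inl hqA),
          hWmem _ heT (by omega) hPe⟩
    · exact ⟨p, q, s, hpq, hqs,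
        hWmem _ hpT (by omega) (Or.inl hpA),
        hWmem _ hqT (by omega) (Or.inl hqA),
        hWmem _ hsT hsMeq (Or.inl hsA)⟩
  obtain ⟨x1, x2, x3, h12, h23, hw1, hw2, hw3⟩ := htriple
  have hW3 : 3 ≤ W.card := by
    have hsub3 : ({x1, x2, x3} : Finset ℕ) ⊆ W := by
      simp [Finset.insert_subset_iff, hw1, hw2, hw3]
    have hc3 : ({x1, x2, x3} : Finset ℕ).card = 3 := by
      rw [Finset.card_insert_of_notMem (by simp; omega),
        Finset.card_insert_of_notMem (by simp; omega), Finset.card_singleton]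
    calc (3 : ℕ) = ({x1, x2, x3} : Finset ℕ).card := hc3.symm
      _ ≤ W.card := Finset.card_le_card hsub3
  -- split the sum
  set cW := W.card with hcW
  set cN := (E.filter (fun x => ¬ P x)).card with hcN
  have hcc : cW + cN = E.card := Finset.card_filter_add_card_filter_not (p := P)
  have hEcard : E.card = T.card - 1 := Finset.card_erase_of_mem hMT
  have hsum2 : ∑ x ∈ E, w x = cW * r + cN * 2 := by
    rw [← Finset.sum_filter_add_sum_filter_not E P w]
    have e1 : ∀ x ∈ E.filter P, w x = r := fun x hx => if_pos (Finset.mem_filter.mp hx).2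
    have e2 : ∀ x ∈ E.filter (fun x => ¬ P x), w x = 2 :=
      fun x hx => if_neg (Finset.mem_filter.mp hx).2
    rw [Finset.sum_congr rfl e1, Finset.sum_congr rfl e2, Finset.sum_const,
      Finset.sum_const, smul_eq_mul, smul_eq_mul]
  obtain ⟨d, hd⟩ : ∃ d, cW = 3 + d := ⟨cW - 3, by omega⟩
  have h6 : 3 * r + 2 * d ≤ cW * r := by
    rw [hd, Nat.add_mul]
    have h7 : d * 2 ≤ d * r := Nat.mul_le_mul_left d hr
    omega
  have hfinal : 3 * r + 2 * d + cN * 2 ≤ M := by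
    refine le_trans ?_ hsum
    rw [hsum2]
    exact Nat.add_le_add_right h6 _
  omega

/-- If `(Z 0, Z 1, Z 2, Z 3)` is a nontrivial `(Q, r)`-scheme on a path `Q` with `n`
vertices, `|Z 0| = |Z 1| = |Z 2| = 1` and `|Z 3| ≥ 4`, then `n ≥ 2|Z 3| + 3r − 7`. -/
theorem path_scheme_four_singletons (n r : ℕ) (hn : 1 ≤ n) (hr : 2 ≤ r)
    (Z : Fin 4 → Finset (Fin n)) (hZ1 : (Z 0).card = 1) (hZ2 : (Z 1).card = 1)
    (hZ3 : (Z 2).card = 1) (hZ4 : 4 ≤ (Z 3).card)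
    (hsame : ∀ i, ∀ x ∈ Z i, ∀ y ∈ Z i, x ≠ y → 2 ≤ (pathGraph n).dist x y)
    (hcross : ∀ i j, i ≠ j → ∀ x ∈ Z i, ∀ y ∈ Z j, x ≠ y →
      r ≤ (pathGraph n).dist x y)
    (hsdr : ∃ ξ : Fin 4 → Fin n, Function.Injective ξ ∧ ∀ i, ξ i ∈ Z i) :
    n ≥ 2 * (Z 3).card + 3 * r - 7 := by
  classical
  obtain ⟨a, hZ0eq⟩ := Finset.card_eq_one.mp hZ1
  obtain ⟨b, hZ1eq⟩ := Finset.card_eq_one.mp hZ2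
  obtain ⟨c, hZ2eq⟩ := Finset.card_eq_one.mp hZ3
  have haZ : a ∈ Z 0 := by rw [hZ0eq]; exact Finset.mem_singleton_self a
  have hbZ : b ∈ Z 1 := by rw [hZ1eq]; exact Finset.mem_singleton_self b
  have hcZ : c ∈ Z 2 := by rw [hZ2eq]; exact Finset.mem_singleton_self c
  obtain ⟨ξ, hinj, hmem⟩ := hsdr
  have hξ0 : ξ 0 = a := by have := hmem 0; rw [hZ0eq] at this; simpa using this
  have hξ1 : ξ 1 = b := by have := hmem 1; rw [hZ1eq] at this; simpa using this
  have hξ2 : ξ 2 = c := by have := hmem 2; rw [hZ2eq] at this; simpa using this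
  have hab : a ≠ b := by
    rw [← hξ0, ← hξ1]; intro h; exact (by decide : (0 : Fin 4) ≠ 1) (hinj h)
  have hac : a ≠ c := by
    rw [← hξ0, ← hξ2]; intro h; exact (by decide : (0 : Fin 4) ≠ 2) (hinj h)
  have hbc : b ≠ c := by
    rw [← hξ1, ← hξ2]; intro h; exact (by decide : (1 : Fin 4) ≠ 2) (hinj h)
  have hndist : ∀ (i j : Fin 4), i ≠ j → ∀ u ∈ Z i, ∀ v ∈ Z j, u ≠ v →
      r ≤ Nat.dist u.val v.val := fun i j hij u hu v hv huv =>
    le_trans (hcross i j hij u hu v hv huv) (pathGraph_dist_le n u v)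
  set Sf : Finset (Fin n) := {a, b, c} with hSf
  set Tf : Finset (Fin n) := insert a (insert b (insert c (Z 3))) with hTf
  have hsepr : ∀ u ∈ Sf, ∀ v ∈ Tf, u ≠ v → r ≤ Nat.dist u.val v.val := by
    intro u hu v hv hne
    simp only [hSf, Finset.mem_insert, Finset.mem_singleton] at hu
    simp only [hTf, Finset.mem_insert] at hv
    rcases hu with rfl | rfl | rfl <;> rcases hv with rfl | rfl | rfl | hv3
    · exact absurd rfl hne
    · exact hndist 0 1 (by decide) _ haZ _ hbZ hne
    · exact hndist 0 2 (by decide) _ haZ _ hcZ hne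
    · exact hndist 0 3 (by decide) _ haZ _ hv3 hne
    · exact hndist 1 0 (by decide) _ hbZ _ haZ hne
    · exact absurd rfl hne
    · exact hndist 1 2 (by decide) _ hbZ _ hcZ hne
    · exact hndist 1 3 (by decide) _ hbZ _ hv3 hne
    · exact hndist 2 0 (by decide) _ hcZ _ haZ hne
    · exact hndist 2 1 (by decide) _ hcZ _ hbZ hne
    · exact absurd rfl hne
    · exact hndist 2 3 (by decide) _ hcZ _ hv3 hne
  have hsep2 : ∀ u ∈ Tf, ∀ v ∈ Tf, u ≠ v → 2 ≤ Nat.dist u.val v.val := by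
    intro u hu v hv hne
    by_cases hu' : u ∈ Sf
    · exact le_trans hr (hsepr u hu' v hv hne)
    · by_cases hv' : v ∈ Sf
      · rw [Nat.dist_comm]
        exact le_trans hr (hsepr v hv' u hu hne.symm)
      · have hu3 : u ∈ Z 3 := by
          simp only [hTf, Finset.mem_insert] at hu
          simp only [hSf, Finset.mem_insert, Finset.mem_singleton] at hu'
          tauto
        have hv3 : v ∈ Z 3 := by
          simp only [hTf, Finset.mem_insert] at hv
          simp only [hSf, Finset.mem_insert, Finset.mem_singleton] at hv'
          tauto
        exact le_trans (hsame 3 u hu3 v hv3 hne) (pathGraph_dist_le n u v)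
  set T : Finset ℕ := Tf.image Fin.val with hT
  set A : Finset ℕ := Sf.image Fin.val with hA
  have hST : Sf ⊆ Tf := by
    intro x hx
    simp only [hSf, Finset.mem_insert, Finset.mem_singleton] at hx
    simp only [hTf, Finset.mem_insert]
    tauto
  have hAT : A ⊆ T := Finset.image_subset_image hST
  have hAcard : A.card = 3 := by
    rw [hA, Finset.card_image_of_injective _ Fin.val_injective, hSf,
      Finset.card_insert_of_notMem (by simp [hab, hac]),
      Finset.card_insert_of_notMem (by simp [hbc]), Finset.card_singleton]
  have hkT : (Z 3).card ≤ T.card := by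
    calc (Z 3).card ≤ Tf.card := Finset.card_le_card (by
          intro x hx; simp only [hTf, Finset.mem_insert]; tauto)
      _ = T.card := (Finset.card_image_of_injective _ Fin.val_injective).symm
  have hTn : ∀ x ∈ T, x < n := by
    intro x hx
    obtain ⟨u, _, rfl⟩ := Finset.mem_image.mp hx
    exact u.isLt
  have hT2 : ∀ x ∈ T, ∀ y ∈ T, x < y → x + 2 ≤ y := by
    intro x hx y hy hxy
    obtain ⟨u, hu, rfl⟩ := Finset.mem_image.mp hx
    obtain ⟨v, hv, rfl⟩ := Finset.mem_image.mp hy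
    have hne : u ≠ v := fun h => by rw [h] at hxy; exact lt_irrefl _ hxy
    have := hsep2 u hu v hv hne
    simp only [Nat.dist] at this
    omega
  have hArr : ∀ s ∈ A, ∀ y ∈ T, s < y → s + r ≤ y := by
    intro s hs y hy hsy
    obtain ⟨u, hu, rfl⟩ := Finset.mem_image.mp hs
    obtain ⟨v, hv, rfl⟩ := Finset.mem_image.mp hy
    have hne : u ≠ v := fun h => by rw [h] at hsy; exact lt_irrefl _ hsy
    have := hsepr u hu v hv hne
    simp only [Nat.dist] at this
    omega
  have hAl : ∀ s ∈ A, ∀ y ∈ T, y < s → y + r ≤ s := by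
    intro s hs y hy hys
    obtain ⟨u, hu, rfl⟩ := Finset.mem_image.mp hs
    obtain ⟨v, hv, rfl⟩ := Finset.mem_image.mp hy
    have hne : u ≠ v := fun h => by rw [h] at hys; exact lt_irrefl _ hys
    have := hsepr u hu v hv hne
    simp only [Nat.dist] at this
    omega
  exact key_count n r ((Z 3).card) hr hZ4 T A hAT hAcard hkT hTn hT2 hArr hAl
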